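/- arXiv:1802.04383 — 2 statements merged into one kernel-verified Lean document; each statement's English description precedes it below -/
import Mathlib

section
/- With F as in the graph total-variation setting (F(x) = f(x) + Σ_v g_v(x_v) + Σ_{(u,v)∈E} w_{(u,v)}|x_u − x_v|, f differentiable, each g_v directionally differentiable, w ≥ 0), for every x ∈ dom F and d ∈ ℝ^V one has F'(x, d) = F'(x, min(d,0)) + F'(x, max(d,0)), where min(d,0) and max(d,0) denote coordinatewise minimum and maximum with 0. -/
open Filter Set Finset

def HasDirDeriv {Ω : Type*} [AddCommGroup Ω] [Module ℝ Ω]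
    (h : Ω → EReal) (x d : Ω) (L : EReal) : Prop :=
  Tendsto (fun t : ℝ => ((t⁻¹ : ℝ) : EReal) * (h (x + t • d) - h x))
    (nhdsWithin 0 (Set.Ioi 0)) (nhds L)

variable {V : Type*} [Fintype V] [DecidableEq V]

/-- The objective `F = f + Σ_v g_v + graph total variation`. -/
noncomputable def objF (E : Finset (V × V)) (w : V × V → ℝ)
    (f : (V → ℝ) → ℝ) (g : V → ℝ → EReal) (x : V → ℝ) : EReal :=
  ((f x : ℝ) : EReal) + ∑ v, g v (x v) +
    ((∑ e ∈ E, w e * |x e.1 - x e.2| : ℝ) : EReal)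

/-- `δ⁺_v(x) = ∇_v f(x) + g_v'(x_v, +1) + Σ_{e ∋ v} w_e sign(x_v − x_u)`. -/
noncomputable def deltaPlus (E : Finset (V × V)) (w : V × V → ℝ)
    (f : (V → ℝ) → ℝ) (gd : V → ℝ → ℝ → EReal) (x : V → ℝ) (v : V) : EReal :=
  ((fderiv ℝ f x (Pi.single v 1) : ℝ) : EReal) + gd v (x v) 1 +
    ((∑ e ∈ E.filter (fun e => e.1 = v ∨ e.2 = v),
        w e * Real.sign (x v - x (if e.1 = v then e.2 else e.1)) : ℝ) : EReal)

/-- `δ⁻_v(x) = ∇_v f(x) − g_v'(x_v, −1) + Σ_{e ∋ v} w_e sign(x_v − x_u)`. -/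
noncomputable def deltaMinus (E : Finset (V × V)) (w : V × V → ℝ)
    (f : (V → ℝ) → ℝ) (gd : V → ℝ → ℝ → EReal) (x : V → ℝ) (v : V) : EReal :=
  ((fderiv ℝ f x (Pi.single v 1) : ℝ) : EReal) - gd v (x v) (-1) +
    ((∑ e ∈ E.filter (fun e => e.1 = v ∨ e.2 = v),
        w e * Real.sign (x v - x (if e.1 = v then e.2 else e.1)) : ℝ) : EReal)

/-- The value of the directional derivative of `F` at `x` in direction `d`. -/
noncomputable def dirDerivVal (E : Finset (V × V)) (w : V × V → ℝ)
    (f : (V → ℝ) → ℝ) (gd : V → ℝ → ℝ → EReal) (x d : V → ℝ) : EReal :=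
  (∑ v ∈ univ.filter (fun v => 0 < d v),
      ((d v : ℝ) : EReal) * deltaPlus E w f gd x v) +
  (∑ v ∈ univ.filter (fun v => d v < 0),
      ((d v : ℝ) : EReal) * deltaMinus E w f gd x v) +
  ((∑ e ∈ E.filter (fun e => x e.1 = x e.2), w e * |d e.1 - d e.2| : ℝ) : EReal)

/-! For every direction `c` the difference quotients of `F` at `x` split into the `g_v`-quotients
and a real-valued quotient of `f + TV`; since `F x` is finite, the limits add up in `EReal` to
`Σ_v g_v'(x_v; c_v) + ∇f(x) c + Σ_e w_e |·|'(x_u - x_v; c_u - c_v)`. This value is additive along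
`d = min d 0 + max d 0`: the gradient term is linear, `g_v'(x_v; 0) = 0` and one of `min (d v) 0`,
`max (d v) 0` vanishes, and an edge term is linear when `x_u ≠ x_v` and equals `w_e |d_u - d_v|`
when `x_u = x_v`, where `|a - b| = |min a 0 - min b 0| + |max a 0 - max b 0|`. -/

open Topology

theorem EReal.sum_ne_bot {ι : Type*} {s : Finset ι} {f : ι → EReal} (h : ∀ i ∈ s, f i ≠ ⊥) :
    ∑ i ∈ s, f i ≠ ⊥ :=
  Finset.sum_induction f (· ≠ ⊥) (fun _ _ ha hb => EReal.add_ne_bot_iff.2 ⟨ha, hb⟩)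
    EReal.zero_ne_bot h

theorem EReal.sum_ne_top {ι : Type*} {s : Finset ι} {f : ι → EReal} (h : ∀ i ∈ s, f i ≠ ⊤) :
    ∑ i ∈ s, f i ≠ ⊤ :=
  Finset.sum_induction f (· ≠ ⊤) (fun _ _ ha hb => EReal.add_ne_top ha hb) EReal.zero_ne_top h

namespace HasDirDeriv

variable {Ω : Type*} [AddCommGroup Ω] [Module ℝ Ω] {x d : Ω}

theorem unique {h : Ω → EReal} {L₁ L₂ : EReal} (h₁ : HasDirDeriv h x d L₁)
    (h₂ : HasDirDeriv h x d L₂) : L₁ = L₂ :=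
  tendsto_nhds_unique h₁ h₂

theorem eq_zero_of_dir_eq_zero {h : Ω → EReal} {L : EReal} (hL : HasDirDeriv h x 0 L)
    (hx_bot : h x ≠ ⊥) (hx_top : h x ≠ ⊤) : L = 0 := by
  refine hL.unique (tendsto_const_nhds.congr fun t => ?_)
  rw [smul_zero, add_zero, EReal.sub_self hx_top hx_bot, mul_zero]

theorem comp_linearMap {Ω' : Type*} [AddCommGroup Ω'] [Module ℝ Ω'] {h : Ω' → EReal}
    {L : EReal} (ℓ : Ω →ₗ[ℝ] Ω') (hL : HasDirDeriv h (ℓ x) (ℓ d) L) :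
    HasDirDeriv (h ∘ ℓ) x d L := by
  simpa only [HasDirDeriv, Function.comp_apply, map_add, map_smul] using hL

theorem of_tendsto_real {φ : Ω → ℝ} {ℓ : ℝ}
    (hφ : Tendsto (fun t : ℝ => t⁻¹ * (φ (x + t • d) - φ x)) (𝓝[>] 0) (𝓝 ℓ)) :
    HasDirDeriv (fun y => (φ y : EReal)) x d ℓ :=
  (EReal.tendsto_coe.2 hφ).congr fun t => by rw [EReal.coe_mul, EReal.coe_sub]

theorem add {h₁ h₂ : Ω → EReal} {L₁ L₂ : EReal} (hL₁ : HasDirDeriv h₁ x d L₁)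
    (hL₂ : HasDirDeriv h₂ x d L₂) (h₁_bot : h₁ x ≠ ⊥) (h₁_top : h₁ x ≠ ⊤)
    (h₂_bot : h₂ x ≠ ⊥) (h₂_top : h₂ x ≠ ⊤) (hL₁_bot : L₁ ≠ ⊥) (hL₂_bot : L₂ ≠ ⊥) :
    HasDirDeriv (fun y => h₁ y + h₂ y) x d (L₁ + L₂) := by
  have hsum := (EReal.continuousAt_add (p := (L₁, L₂)) (.inr hL₂_bot)
    (.inl hL₁_bot)).tendsto.comp (hL₁.prodMk_nhds hL₂)
  refine hsum.congr' (eventually_mem_nhdsWithin.mono fun t (ht : 0 < t) => ?_)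
  lift h₁ x to ℝ using ⟨h₁_top, h₁_bot⟩ with r₁
  lift h₂ x to ℝ using ⟨h₂_top, h₂_bot⟩ with r₂
  have hquot : h₁ (x + t • d) + h₂ (x + t • d) - (r₁ + r₂ : EReal)
      = (h₁ (x + t • d) - r₁) + (h₂ (x + t • d) - r₂) := by
    rw [← EReal.coe_add, sub_eq_add_neg, ← EReal.coe_neg, neg_add, EReal.coe_add, EReal.coe_neg,
      EReal.coe_neg, add_add_add_comm, sub_eq_add_neg, sub_eq_add_neg]
  rw [Function.comp_apply, hquot, EReal.left_distrib_of_nonneg_of_ne_top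
    (EReal.coe_nonneg.2 (inv_nonneg.2 ht.le)) (EReal.coe_ne_top _)]

theorem sum {ι : Type*} (s : Finset ι) {h : ι → Ω → EReal} {L : ι → EReal}
    (hL : ∀ i ∈ s, HasDirDeriv (h i) x d (L i)) (h_bot : ∀ i ∈ s, h i x ≠ ⊥)
    (h_top : ∀ i ∈ s, h i x ≠ ⊤) (hL_bot : ∀ i ∈ s, L i ≠ ⊥) :
    HasDirDeriv (fun y => ∑ i ∈ s, h i y) x d (∑ i ∈ s, L i) := by
  induction s using Finset.cons_induction with
  | empty => simp [HasDirDeriv]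
  | cons i s hi ih =>
    simp only [Finset.forall_mem_cons] at hL h_bot h_top hL_bot
    simp only [Finset.sum_cons]
    exact hL.1.add (ih hL.2 h_bot.2 h_top.2 hL_bot.2) h_bot.1 h_top.1
      (EReal.sum_ne_bot h_bot.2) (EReal.sum_ne_top h_top.2) hL_bot.1 (EReal.sum_ne_bot hL_bot.2)

end HasDirDeriv

theorem abs_sub_eq_abs_sub_min_add_abs_sub_max (a b c : ℝ) :
    |a - b| = |min a c - min b c| + |max a c - max b c| := by
  have ha := min_add_max a c
  have hb := min_add_max b c
  rcases le_total a b with hab | hab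
  · rw [abs_of_nonpos (by linarith), abs_of_nonpos (sub_nonpos.2 (min_le_min_right c hab)),
      abs_of_nonpos (sub_nonpos.2 (max_le_max_right c hab))]
    linarith
  · rw [abs_of_nonneg (by linarith), abs_of_nonneg (sub_nonneg.2 (min_le_min_right c hab)),
      abs_of_nonneg (sub_nonneg.2 (max_le_max_right c hab))]
    linarith

theorem eq_apply_min_add_apply_max {M : Type*} [AddZeroClass M] {φ : ℝ → M} (hφ : φ 0 = 0)
    (b : ℝ) : φ b = φ (min b 0) + φ (max b 0) := by
  rcases le_total b 0 with hb | hb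
  · rw [min_eq_left hb, max_eq_right hb, hφ, add_zero]
  · rw [min_eq_right hb, max_eq_left hb, hφ, zero_add]

noncomputable def absDirDeriv (a b : ℝ) : ℝ :=
  if a = 0 then |b| else SignType.sign a * b

theorem tendsto_abs_slope_right (a b : ℝ) :
    Tendsto (fun t : ℝ => t⁻¹ * (|a + t * b| - |a|)) (𝓝[>] 0) (𝓝 (absDirDeriv a b)) := by
  by_cases ha : a = 0
  · refine tendsto_const_nhds.congr' (eventually_mem_nhdsWithin.mono fun t (ht : 0 < t) => ?_)
    dsimp only
    rw [absDirDeriv, if_pos ha, ha, zero_add, abs_zero, sub_zero, abs_mul, abs_of_pos ht,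
      inv_mul_cancel_left₀ ht.ne']
  · have hline : HasDerivAt (fun t : ℝ => a + t * b) b 0 := by
      simpa using ((hasDerivAt_id (0 : ℝ)).mul_const b).const_add a
    have habs := (hasDerivAt_abs (by simpa using ha)).comp (0 : ℝ) hline
    simpa [absDirDeriv, ha] using habs.tendsto_slope_zero_right

theorem absDirDeriv_sub_eq_add (a p q : ℝ) :
    absDirDeriv a (p - q) =
      absDirDeriv a (min p 0 - min q 0) + absDirDeriv a (max p 0 - max q 0) := by
  unfold absDirDeriv
  split_ifs
  · exact abs_sub_eq_abs_sub_min_add_abs_sub_max p q 0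
  · have hp := min_add_max p 0
    have hq := min_add_max q 0
    linear_combination (SignType.sign a : ℝ) * (hq - hp)

noncomputable def tvDirDeriv {ι : Type*} (E : Finset (ι × ι)) (w : ι × ι → ℝ) (x c : ι → ℝ) :
    ℝ :=
  ∑ e ∈ E, w e * absDirDeriv (x e.1 - x e.2) (c e.1 - c e.2)

theorem tendsto_tv_slope_right {ι : Type*} (E : Finset (ι × ι)) (w : ι × ι → ℝ)
    (x c : ι → ℝ) :
    Tendsto (fun t : ℝ => t⁻¹ * ((∑ e ∈ E, w e * |(x + t • c) e.1 - (x + t • c) e.2|) -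
      ∑ e ∈ E, w e * |x e.1 - x e.2|)) (𝓝[>] 0) (𝓝 (tvDirDeriv E w x c)) := by
  refine (tendsto_finsetSum E fun e _ =>
    (tendsto_abs_slope_right (x e.1 - x e.2) (c e.1 - c e.2)).const_mul (w e)).congr fun t => ?_
  rw [← Finset.sum_sub_distrib, Finset.mul_sum]
  refine Finset.sum_congr rfl fun e _ => ?_
  simp only [Pi.add_apply, Pi.smul_apply, smul_eq_mul]
  ring_nf

section GraphTV

variable (E : Finset (V × V)) (w : V × V → ℝ) (f : (V → ℝ) → ℝ) (gd : V → ℝ → ℝ → EReal)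

noncomputable def objDirDeriv (x c : V → ℝ) : EReal :=
  ∑ v, gd v (x v) (c v) + ((fderiv ℝ f x c + tvDirDeriv E w x c : ℝ) : EReal)

omit [DecidableEq V] in
theorem objF_eq_sum_add_coe (g : V → ℝ → EReal) (y : V → ℝ) :
    objF E w f g y = ∑ v, g v (y v) + ((f y + ∑ e ∈ E, w e * |y e.1 - y e.2| : ℝ) : EReal) := by
  rw [objF, EReal.coe_add, add_comm _ (∑ v, g v (y v)), add_assoc]

omit [DecidableEq V] in
theorem hasDirDeriv_objF {g : V → ℝ → EReal} {x : V → ℝ} (hf : DifferentiableAt ℝ f x)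
    (hg_bot : ∀ v, g v (x v) ≠ ⊥) (hg_top : ∀ v, g v (x v) ≠ ⊤)
    (hgd : ∀ v c, HasDirDeriv (g v) (x v) c (gd v (x v) c)) (hgd_bot : ∀ v c, gd v (x v) c ≠ ⊥)
    (c : V → ℝ) : HasDirDeriv (objF E w f g) x c (objDirDeriv E w f gd x c) := by
  have hsmooth : HasDirDeriv (fun y => ((f y + ∑ e ∈ E, w e * |y e.1 - y e.2| : ℝ) : EReal))
      x c ((fderiv ℝ f x c + tvDirDeriv E w x c : ℝ) : EReal) :=
    HasDirDeriv.of_tendsto_real (((hf.hasFDerivAt.hasLineDerivAt c).tendsto_slope_zero_right.add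
      (tendsto_tv_slope_right E w x c)).congr fun t => by simp only [smul_eq_mul]; ring)
  have hg : HasDirDeriv (fun y => ∑ v, g v (y v)) x c (∑ v, gd v (x v) (c v)) :=
    HasDirDeriv.sum univ
      (fun v _ => HasDirDeriv.comp_linearMap (x := x) (d := c) (LinearMap.proj v) (hgd v (c v)))
      (fun v _ => hg_bot v) (fun v _ => hg_top v) (fun v _ => hgd_bot v _)
  have hsum := hg.add hsmooth (EReal.sum_ne_bot fun v _ => hg_bot v)
    (EReal.sum_ne_top fun v _ => hg_top v) (EReal.coe_ne_bot _) (EReal.coe_ne_top _)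
    (EReal.sum_ne_bot fun v _ => hgd_bot v _) (EReal.coe_ne_bot _)
  rwa [← funext (objF_eq_sum_add_coe E w f g)] at hsum

omit [DecidableEq V] in
theorem objDirDeriv_eq_add {x : V → ℝ} (hgd_zero : ∀ v, gd v (x v) 0 = 0) (d : V → ℝ) :
    objDirDeriv E w f gd x d = objDirDeriv E w f gd x (fun v => min (d v) 0) +
      objDirDeriv E w f gd x (fun v => max (d v) 0) := by
  have hfd : fderiv ℝ f x d = fderiv ℝ f x (fun v => min (d v) 0) +
      fderiv ℝ f x (fun v => max (d v) 0) := by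
    rw [← map_add]
    congr 1
    funext v
    rw [Pi.add_apply, min_add_max, add_zero]
  have htv : tvDirDeriv E w x d = tvDirDeriv E w x (fun v => min (d v) 0) +
      tvDirDeriv E w x (fun v => max (d v) 0) := by
    simp only [tvDirDeriv, ← Finset.sum_add_distrib, ← mul_add, ← absDirDeriv_sub_eq_add]
  have hgd : ∑ v, gd v (x v) (d v) = ∑ v, gd v (x v) (min (d v) 0) +
      ∑ v, gd v (x v) (max (d v) 0) := by
    rw [← Finset.sum_add_distrib]
    exact Finset.sum_congr rfl fun v _ => eq_apply_min_add_apply_max (hgd_zero v) (d v)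
  rw [objDirDeriv, objDirDeriv, objDirDeriv, hfd, htv, hgd, add_add_add_comm (fderiv ℝ f x _),
    EReal.coe_add]
  abel

end GraphTV

theorem ne_top_of_objF_ne_top {E : Finset (V × V)} {w : V × V → ℝ} {f : (V → ℝ) → ℝ}
    {g : V → ℝ → EReal} {x : V → ℝ} (hg_bot : ∀ v, g v (x v) ≠ ⊥) (hx : objF E w f g x ≠ ⊤)
    (v : V) : g v (x v) ≠ ⊤ := by
  intro hv
  have hsum : ∑ u, g u (x u) = ⊤ := by
    rw [← Finset.add_sum_erase _ _ (Finset.mem_univ v), hv, EReal.top_add_of_ne_bot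
      (EReal.sum_ne_bot fun u _ => hg_bot u)]
  exact hx (by rw [objF, hsum, EReal.coe_add_top, EReal.top_add_coe])

theorem stmt_9_general (E : Finset (V × V)) (w : V × V → ℝ)
    (f : (V → ℝ) → ℝ) (hf : Differentiable ℝ f)
    (g : V → ℝ → EReal) (hgbot : ∀ v y, g v y ≠ ⊥)
    (gd : V → ℝ → ℝ → EReal)
    (hgd : ∀ v y, g v y ≠ ⊤ → ∀ dir : ℝ,
      HasDirDeriv (g v) y dir (gd v y dir) ∧ gd v y dir ≠ ⊥)
    (x : V → ℝ) (hx : objF E w f g x ≠ ⊤) (d : V → ℝ)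
    (Lm Lp : EReal)
    (hLm : HasDirDeriv (objF E w f g) x (fun v => min (d v) 0) Lm)
    (hLp : HasDirDeriv (objF E w f g) x (fun v => max (d v) 0) Lp) :
    HasDirDeriv (objF E w f g) x d (Lm + Lp) := by
  have hg_bot : ∀ v, g v (x v) ≠ ⊥ := fun v => hgbot v (x v)
  have hg_top := ne_top_of_objF_ne_top hg_bot hx
  have hgd_x := fun v => hgd v (x v) (hg_top v)
  have hderiv := hasDirDeriv_objF E w f gd (hf x) hg_bot hg_top (fun v c => (hgd_x v c).1)
    fun v c => (hgd_x v c).2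
  have hgd_zero : ∀ v, gd v (x v) 0 = 0 := fun v =>
    (hgd_x v 0).1.eq_zero_of_dir_eq_zero (hg_bot v) (hg_top v)
  rw [hLm.unique (hderiv _), hLp.unique (hderiv _), ← objDirDeriv_eq_add E w f gd hgd_zero]
  exact hderiv d

theorem stmt_9 (E : Finset (V × V)) (w : V × V → ℝ) (hw : ∀ e ∈ E, 0 ≤ w e)
    (f : (V → ℝ) → ℝ) (hf : Differentiable ℝ f)
    (g : V → ℝ → EReal) (hgbot : ∀ v y, g v y ≠ ⊥)
    (gd : V → ℝ → ℝ → EReal)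
    (hgd : ∀ v y, g v y ≠ ⊤ → ∀ dir : ℝ,
      HasDirDeriv (g v) y dir (gd v y dir) ∧ gd v y dir ≠ ⊥)
    (x : V → ℝ) (hx : objF E w f g x ≠ ⊤) (d : V → ℝ)
    (Lm Lp : EReal)
    (hLm : HasDirDeriv (objF E w f g) x (fun v => min (d v) 0) Lm)
    (hLp : HasDirDeriv (objF E w f g) x (fun v => max (d v) 0) Lp) :
    HasDirDeriv (objF E w f g) x d (Lm + Lp) :=
  stmt_9_general E w f hf g hgbot gd hgd x hx d Lm Lp hLm hLp
end

section
/- Let F be directionally differentiable and x ∈ dom F. If d* minimizes d ↦ F'(x,d) over {−1,0,+1}^V, then F'(x, d*) ≤ 0; moreover, x is a stationary point of F (all directional derivatives at x are nonnegative) if and only if F'(x, d*) = 0, where F = f + Σ_v g_v + graph total variation with f differentiable, g_v directionally differentiable, w ≥ 0. -/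
open Filter Set Finset

variable {V : Type*} [Fintype V] [DecidableEq V]

set_option linter.unusedSectionVars false
set_option linter.unusedVariables false

section Helpers

lemma esum_ne_bot {ι : Type*} (s : Finset ι) (f : ι → EReal)
    (h : ∀ i ∈ s, f i ≠ ⊥) : ∑ i ∈ s, f i ≠ ⊥ := by
  classical
  induction s using Finset.cons_induction with
  | empty => simp
  | cons a s' hx ih =>
    rw [Finset.sum_cons]
    rw [ne_eq, EReal.add_eq_bot_iff]
    push_neg
    exact ⟨h a (Finset.mem_cons_self a s'), ih fun i hi => h i (Finset.mem_cons_of_mem hi)⟩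

lemma eterm_ne_top {ι : Type*} (s : Finset ι) (f : ι → EReal)
    (hb : ∀ i ∈ s, f i ≠ ⊥) (h : ∑ i ∈ s, f i ≠ ⊤) : ∀ i ∈ s, f i ≠ ⊤ := by
  classical
  intro i hi hit
  apply h
  rw [← Finset.add_sum_erase s f hi, hit]
  exact EReal.top_add_of_ne_bot (esum_ne_bot _ _ fun j hj => hb j (Finset.mem_of_mem_erase hj))

lemma epos_mul_ne_bot {r : ℝ} (hr : 0 < r) {a : EReal} (ha : a ≠ ⊥) : (r : EReal) * a ≠ ⊥ := by
  induction a with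
  | bot => exact absurd rfl ha
  | coe b => rw [← EReal.coe_mul]; exact EReal.coe_ne_bot _
  | top => rw [EReal.coe_mul_top_of_pos hr]; exact (by simp : (⊤:EReal) ≠ ⊥)

lemma eneg_mul_ne_bot {r : ℝ} (hr : r < 0) {a : EReal} (ha : a ≠ ⊤) : (r : EReal) * a ≠ ⊥ := by
  induction a with
  | top => exact absurd rfl ha
  | coe b => rw [← EReal.coe_mul]; exact EReal.coe_ne_bot _
  | bot => rw [EReal.coe_mul_bot_of_neg hr]; exact (by simp : (⊤:EReal) ≠ ⊥)

lemma esub_self {a : EReal} (h1 : a ≠ ⊤) (h2 : a ≠ ⊥) : a - a = 0 := by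
  induction a with
  | bot => exact absurd rfl h2
  | top => exact absurd rfl h1
  | coe r => rw [← EReal.coe_sub]; norm_cast; ring

/-- distribution of positive real scalar over a 3-sum with middle term ≠ ⊥ -/
lemma emul_pos_add3 {r : ℝ} (hr : 0 < r) (a c : ℝ) {b : EReal} (hb : b ≠ ⊥) :
    (r : EReal) * ((a : EReal) + b + (c : EReal)) =
      ((r * (a + c) : ℝ) : EReal) + (r : EReal) * b := by
  induction b with
  | bot => exact absurd rfl hb
  | top =>
    rw [EReal.add_top_of_ne_bot (EReal.coe_ne_bot a), EReal.top_add_of_ne_bot (EReal.coe_ne_bot c), EReal.coe_mul_top_of_pos hr, EReal.add_top_of_ne_bot (EReal.coe_ne_bot _)]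
  | coe b => norm_cast; ring


/-- distribution of negative real scalar over 3-sum with middle term ≠ ⊤ -/
lemma emul_neg_add3 {r : ℝ} (hr : r < 0) (a c : ℝ) {b : EReal} (hb : b ≠ ⊤) :
    (r : EReal) * ((a : EReal) + b + (c : EReal)) =
      ((r * (a + c) : ℝ) : EReal) + (r : EReal) * b := by
  induction b with
  | top => exact absurd rfl hb
  | bot =>
    rw [show (a:EReal) + ⊥ = ⊥ by simp, show (⊥:EReal) + (c:EReal) = ⊥ by simp,
      EReal.coe_mul_bot_of_neg hr, EReal.add_top_of_ne_bot (EReal.coe_ne_bot _)]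
  | coe b => norm_cast; ring

/-- two-term positive distribution over terms ≠ ⊥ -/
lemma emul_pos_add2 {r : ℝ} (hr : 0 < r) {a b : EReal} (ha : a ≠ ⊥) (hb : b ≠ ⊥) :
    (r : EReal) * (a + b) = (r : EReal) * a + (r : EReal) * b := by
  induction a with
  | bot => exact absurd rfl ha
  | top =>
    rw [EReal.top_add_of_ne_bot hb, EReal.coe_mul_top_of_pos hr]
    induction b with
    | bot => exact absurd rfl hb
    | top => rw [EReal.coe_mul_top_of_pos hr]; simp
    | coe b => rw [← EReal.coe_mul, EReal.top_add_of_ne_bot (EReal.coe_ne_bot _)]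
  | coe a =>
    induction b with
    | bot => exact absurd rfl hb
    | top =>
      rw [EReal.add_top_of_ne_bot (EReal.coe_ne_bot _), EReal.coe_mul_top_of_pos hr,
        ← EReal.coe_mul, EReal.add_top_of_ne_bot (EReal.coe_ne_bot _)]
    | coe b => norm_cast; ring

lemma emul_pos_sum {ι : Type*} (s : Finset ι) (u : ι → EReal) {r : ℝ} (hr : 0 < r)
    (h : ∀ i ∈ s, u i ≠ ⊥) :
    (r : EReal) * ∑ i ∈ s, u i = ∑ i ∈ s, (r : EReal) * u i := by
  classical
  induction s using Finset.cons_induction with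
  | empty => simp
  | cons a s' hx ih =>
    have h1 : u a ≠ ⊥ := h a (Finset.mem_cons_self a s')
    have h2 : ∀ i ∈ s', u i ≠ ⊥ := fun i hi => h i (Finset.mem_cons_of_mem hi)
    rw [Finset.sum_cons, Finset.sum_cons, emul_pos_add2 hr h1 (esum_ne_bot _ _ h2), ih h2]

lemma esub_sum_coe {ι : Type*} (s : Finset ι) (u : ι → EReal) (b : ι → ℝ) :
    (∑ i ∈ s, u i) - ((∑ i ∈ s, b i : ℝ) : EReal) = ∑ i ∈ s, (u i - (b i : EReal)) := by
  classical
  induction s using Finset.cons_induction with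
  | empty => simp
  | cons a s' hx ih =>
    rw [Finset.sum_cons, Finset.sum_cons, Finset.sum_cons, ← ih]
    rw [sub_eq_add_neg, sub_eq_add_neg, sub_eq_add_neg, EReal.coe_add, EReal.neg_add
      (by simp) (by simp)]
    simp only [sub_eq_add_neg]; ac_rfl


lemma etendsto_const_mul {α : Type*} {l : Filter α} {u : α → EReal} {L : EReal}
    {c : ℝ} (hc : c ≠ 0) (h : Tendsto u l (nhds L)) :
    Tendsto (fun t => (c : EReal) * u t) l (nhds ((c : EReal) * L)) := by
  have hcont : ContinuousAt (fun p : EReal × EReal => p.1 * p.2) ((c : EReal), L) :=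
    EReal.continuousAt_mul (Or.inl (show ((c:ℝ):EReal) ≠ 0 by exact_mod_cast hc))
      (Or.inl (show ((c:ℝ):EReal) ≠ 0 by exact_mod_cast hc))
      (Or.inl (EReal.coe_ne_bot _)) (Or.inl (EReal.coe_ne_top _))
  exact hcont.tendsto.comp (tendsto_const_nhds.prodMk_nhds h)

lemma etendsto_add {α : Type*} {l : Filter α} {u v : α → EReal} {L M : EReal}
    (hL : L ≠ ⊥) (hM : M ≠ ⊥) (h : Tendsto u l (nhds L)) (h' : Tendsto v l (nhds M)) :
    Tendsto (fun t => u t + v t) l (nhds (L + M)) := by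
  have hcont : ContinuousAt (fun p : EReal × EReal => p.1 + p.2) (L, M) :=
    EReal.continuousAt_add (Or.inr hM) (Or.inl hL)
  exact hcont.tendsto.comp (h.prodMk_nhds h')


lemma etendsto_sum {ι α : Type*} {l : Filter α} (s : Finset ι) (u : ι → α → EReal)
    (L : ι → EReal) (hL : ∀ i ∈ s, L i ≠ ⊥)
    (h : ∀ i ∈ s, Tendsto (u i) l (nhds (L i))) :
    Tendsto (fun t => ∑ i ∈ s, u i t) l (nhds (∑ i ∈ s, L i)) := by
  classical
  induction s using Finset.cons_induction with
  | empty => simpa using tendsto_const_nhds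
  | cons a s' hx ih =>
    simp only [Finset.sum_cons]
    exact etendsto_add (hL a (Finset.mem_cons_self a s'))
      (esum_ne_bot _ _ fun i hi => hL i (Finset.mem_cons_of_mem hi))
      (h a (Finset.mem_cons_self a s'))
      (ih (fun i hi => hL i (Finset.mem_cons_of_mem hi))
        (fun i hi => h i (Finset.mem_cons_of_mem hi)))

/-- positive scaling of directional derivatives -/
lemma hasDirDeriv_smul {Ω : Type*} [AddCommGroup Ω] [Module ℝ Ω]
    {h : Ω → EReal} {x d : Ω} {L : EReal} {c : ℝ} (hc : 0 < c)
    (hd : HasDirDeriv h x d L) : HasDirDeriv h x (c • d) ((c : EReal) * L) := by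
  have hphi : Tendsto (fun t : ℝ => t * c) (nhdsWithin 0 (Set.Ioi 0))
      (nhdsWithin 0 (Set.Ioi 0)) := by
    apply tendsto_nhdsWithin_of_tendsto_nhds_of_eventually_within
    · have := ((continuous_mul_right c).tendsto' 0 0 (by simp)).mono_left
        (nhdsWithin_le_nhds (s := Set.Ioi (0:ℝ)))
      exact this
    · filter_upwards [self_mem_nhdsWithin] with t ht
      exact mul_pos ht hc
  have h2 := (etendsto_const_mul (c := c) hc.ne' (hd.comp hphi))
  apply h2.congr
  intro t
  show (c : EReal) * ((((t * c)⁻¹ : ℝ) : EReal) * (h (x + (t * c) • d) - h x))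
      = ((t⁻¹ : ℝ) : EReal) * (h (x + t • (c • d)) - h x)
  rw [← mul_assoc, ← EReal.coe_mul, smul_smul, mul_comm t c]
  congr 2
  rw [mul_inv, ← mul_assoc, mul_inv_cancel₀ hc.ne', one_mul]

lemma tendsto_absquot (a b : ℝ) :
    Tendsto (fun t : ℝ => t⁻¹ * (|a + t * b| - |a|)) (nhdsWithin 0 (Set.Ioi 0))
      (nhds (if a = 0 then |b| else Real.sign a * b)) := by
  rcases eq_or_ne a 0 with ha | ha
  · rw [if_pos ha]
    apply Tendsto.congr' _ tendsto_const_nhds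
    filter_upwards [self_mem_nhdsWithin] with t ht
    rw [ha, zero_add, abs_zero, sub_zero, abs_mul, abs_of_pos (Set.mem_Ioi.mp ht),
      ← mul_assoc, inv_mul_cancel₀ (Set.mem_Ioi.mp ht).ne', one_mul]
  · rw [if_neg ha]
    apply Tendsto.congr' _ tendsto_const_nhds
    have hmem : Set.Ioo (0:ℝ) (|a| / (|b| + 1)) ∈ nhdsWithin 0 (Set.Ioi 0) :=
      Ioo_mem_nhdsGT_of_mem ⟨le_refl _, by positivity⟩
    filter_upwards [hmem] with t ht
    obtain ⟨ht0, htu⟩ := ht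
    have htb : t * |b| < |a| := by
      have h1 : t * (|b| + 1) < |a| := by
        rw [← lt_div_iff₀ (by positivity)] at *
        exact htu
      nlinarith
    have hub : t * b ≤ t * |b| := mul_le_mul_of_nonneg_left (le_abs_self b) ht0.le
    have hlb : t * (-|b|) ≤ t * b := mul_le_mul_of_nonneg_left (neg_abs_le b) ht0.le
    have key : |a + t * b| = |a| + t * Real.sign a * b := by
      rcases lt_or_gt_of_ne ha with hneg | hpos
      · rw [Real.sign_of_neg hneg]
        have h2 : a + t * b < 0 := by
          have := abs_of_neg hneg
          linarith
        rw [abs_of_neg h2, abs_of_neg hneg]; ring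
      · rw [Real.sign_of_pos hpos]
        have h2 : 0 < a + t * b := by
          have := abs_of_pos hpos
          nlinarith
        rw [abs_of_pos h2, abs_of_pos hpos]; ring
    rw [key]
    field_simp
    ring

lemma tendsto_fquot {E : Type*} [NormedAddCommGroup E] [NormedSpace ℝ E] {f : E → ℝ}
    {x : E} (hf : DifferentiableAt ℝ f x) (d : E) :
    Tendsto (fun t : ℝ => t⁻¹ * (f (x + t • d) - f x)) (nhdsWithin 0 (Set.Ioi 0))
      (nhds (fderiv ℝ f x d)) := by
  have h := (hf.hasFDerivAt.hasLineDerivAt d)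
  rw [HasLineDerivAt, hasDerivAt_iff_tendsto_slope] at h
  have h2 := h.mono_left (nhdsWithin_mono 0 (fun t ht => Set.mem_compl_singleton_iff.mpr
    (ne_of_gt (Set.mem_Ioi.mp ht))))
  apply h2.congr
  intro t
  rw [slope_def_field]
  simp only [zero_smul, add_zero, sub_zero]
  rw [div_eq_inv_mul]

end Helpers

lemma abs_add_of_mul_nonneg {a b : ℝ} (h : 0 ≤ a * b) : |a + b| = |a| + |b| := by
  rcases mul_nonneg_iff.mp h with ⟨ha, hb⟩ | ⟨ha, hb⟩
  · rw [abs_of_nonneg ha, abs_of_nonneg hb, abs_of_nonneg (by linarith)]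
  · rw [abs_of_nonpos ha, abs_of_nonpos hb, abs_of_nonpos (by linarith)]; ring

lemma sign_pos_of_pos {x : ℝ} (h : 0 < Real.sign x) : 0 < x := by
  rcases lt_trichotomy x 0 with h1 | h1 | h1
  · rw [Real.sign_of_neg h1] at h; linarith
  · rw [h1, Real.sign_zero] at h; linarith
  · exact h1

lemma sign_neg_of_neg {x : ℝ} (h : Real.sign x < 0) : x < 0 := by
  rcases lt_trichotomy x 0 with h1 | h1 | h1
  · exact h1
  · rw [h1, Real.sign_zero] at h; linarith
  · rw [Real.sign_of_pos h1] at h; linarith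


lemma roundcore (q : V → ℝ) (E0 : Finset (V × V)) (w : V × V → ℝ) :
    ∀ n : ℕ, ∀ d' : V → ℝ,
      ((univ.filter (fun v => d' v ≠ 0)).image (fun v => |d' v|)).card ≤ n →
      (∑ v, d' v * q v + ∑ e ∈ E0, w e * |d' e.1 - d' e.2|) < 0 →
      ∃ s : V → ℝ, (∀ v, s v = -1 ∨ s v = 0 ∨ s v = 1) ∧
        (∀ v, (0 < s v → 0 < d' v) ∧ (s v < 0 → d' v < 0)) ∧
        (∑ v, s v * q v + ∑ e ∈ E0, w e * |s e.1 - s e.2|) < 0 := by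
  intro n
  induction n with
  | zero =>
    intro d' hcard hneg
    exfalso
    have himg : ((univ.filter (fun v => d' v ≠ 0)).image (fun v => |d' v|)) = ∅ :=
      Finset.card_eq_zero.mp (Nat.le_zero.mp hcard)
    have hz : ∀ v, d' v = 0 := by
      intro v
      by_contra hv
      have : v ∈ univ.filter (fun v => d' v ≠ 0) := Finset.mem_filter.mpr ⟨mem_univ v, hv⟩
      have : |d' v| ∈ ((univ.filter (fun v => d' v ≠ 0)).image (fun v => |d' v|)) :=
        Finset.mem_image_of_mem _ this
      rw [himg] at this
      exact absurd this (Finset.notMem_empty _)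
    have h1 : (∑ v, d' v * q v) = 0 := by
      apply Finset.sum_eq_zero; intro v _; rw [hz v]; ring
    have h2 : (∑ e ∈ E0, w e * |d' e.1 - d' e.2|) = 0 := by
      apply Finset.sum_eq_zero; intro e _; rw [hz e.1, hz e.2]; simp
    rw [h1, h2] at hneg; linarith
  | succ n ih =>
    intro d' hcard hneg
    by_cases hz : ∀ v, d' v = 0
    · exfalso
      have h1 : (∑ v, d' v * q v) = 0 := by
        apply Finset.sum_eq_zero; intro v _; rw [hz v]; ring
      have h2 : (∑ e ∈ E0, w e * |d' e.1 - d' e.2|) = 0 := by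
        apply Finset.sum_eq_zero; intro e _; rw [hz e.1, hz e.2]; simp
      rw [h1, h2] at hneg; linarith
    push_neg at hz
    obtain ⟨v0, hv0⟩ := hz
    set T := ((univ.filter (fun v => d' v ≠ 0)).image (fun v => |d' v|)) with hT
    have hTne : T.Nonempty :=
      ⟨|d' v0|, Finset.mem_image_of_mem _ (Finset.mem_filter.mpr ⟨mem_univ v0, hv0⟩)⟩
    set c := T.min' hTne with hc
    have hcmem : c ∈ T := T.min'_mem hTne
    have hc0 : 0 < c := by
      obtain ⟨v, hv, hvc⟩ := Finset.mem_image.mp hcmem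
      have := (Finset.mem_filter.mp hv).2
      rw [← hvc]
      exact abs_pos.mpr this
    have hcle : ∀ v, d' v ≠ 0 → c ≤ |d' v| := by
      intro v hv
      exact T.min'_le _ (Finset.mem_image_of_mem _ (Finset.mem_filter.mpr ⟨mem_univ v, hv⟩))
    set s0 : V → ℝ := fun v => Real.sign (d' v) with hs0
    set d₂ : V → ℝ := fun v => d' v - c * s0 v with hd₂
    set r' : V → ℝ := fun v => if d' v = 0 then 0 else |d' v| - c with hr'
    have hr'nn : ∀ v, 0 ≤ r' v := by
      intro v
      simp only [hr']
      split
      · exact le_refl 0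
      · next h => linarith [hcle v h]
    have hd₂eq : ∀ v, d₂ v = s0 v * r' v := by
      intro v
      simp only [hd₂, hr', hs0]
      split
      · next h => simp [h, Real.sign_zero]
      · next h =>
        rcases lt_or_gt_of_ne h with hn | hp
        · rw [Real.sign_of_neg hn, abs_of_neg hn]; ring
        · rw [Real.sign_of_pos hp, abs_of_pos hp]; ring
    have ts0 : ∀ v, s0 v = -1 ∨ s0 v = 0 ∨ s0 v = 1 := fun v => Real.sign_apply_eq (d' v)
    -- edge identity
    have edgeid : ∀ u v : V, |d' u - d' v| = c * |s0 u - s0 v| + |d₂ u - d₂ v| := by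
      intro u v
      have hAB : d' u - d' v = c * (s0 u - s0 v) + (d₂ u - d₂ v) := by
        simp only [hd₂]; ring
      have hsign : 0 ≤ (s0 u - s0 v) * (d₂ u - d₂ v) := by
        rw [hd₂eq u, hd₂eq v]
        rcases ts0 u with h1 | h1 | h1 <;> rcases ts0 v with h2 | h2 | h2 <;>
          rw [h1, h2] <;> nlinarith [hr'nn u, hr'nn v]
      have hmul : 0 ≤ (c * (s0 u - s0 v)) * (d₂ u - d₂ v) := by
        have : (c * (s0 u - s0 v)) * (d₂ u - d₂ v)
            = c * ((s0 u - s0 v) * (d₂ u - d₂ v)) := by ring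
        rw [this]
        exact mul_nonneg hc0.le hsign
      rw [hAB, abs_add_of_mul_nonneg hmul, abs_mul, abs_of_pos hc0]
    -- split Ψ
    have hsplit : (∑ v, d' v * q v + ∑ e ∈ E0, w e * |d' e.1 - d' e.2|)
        = c * (∑ v, s0 v * q v + ∑ e ∈ E0, w e * |s0 e.1 - s0 e.2|)
          + (∑ v, d₂ v * q v + ∑ e ∈ E0, w e * |d₂ e.1 - d₂ e.2|) := by
      have h1 : ∑ v, d' v * q v = c * ∑ v, s0 v * q v + ∑ v, d₂ v * q v := by
        rw [Finset.mul_sum, ← Finset.sum_add_distrib]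
        apply Finset.sum_congr rfl
        intro v _
        simp only [hd₂]; ring
      have h2 : ∑ e ∈ E0, w e * |d' e.1 - d' e.2|
          = c * ∑ e ∈ E0, w e * |s0 e.1 - s0 e.2| + ∑ e ∈ E0, w e * |d₂ e.1 - d₂ e.2| := by
        rw [Finset.mul_sum, ← Finset.sum_add_distrib]
        apply Finset.sum_congr rfl
        intro e _
        rw [edgeid e.1 e.2]; ring
      rw [h1, h2]; ring
    by_cases hs0neg : (∑ v, s0 v * q v + ∑ e ∈ E0, w e * |s0 e.1 - s0 e.2|) < 0
    · refine ⟨s0, ts0, fun v => ⟨fun h => sign_pos_of_pos h, fun h => sign_neg_of_neg h⟩, hs0neg⟩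
    push_neg at hs0neg
    have hΨd₂ : (∑ v, d₂ v * q v + ∑ e ∈ E0, w e * |d₂ e.1 - d₂ e.2|) < 0 := by
      nlinarith [mul_nonneg hc0.le hs0neg]
    -- measure decreases
    have hcard2 : ((univ.filter (fun v => d₂ v ≠ 0)).image (fun v => |d₂ v|)).card ≤ n := by
      have hsub : ((univ.filter (fun v => d₂ v ≠ 0)).image (fun v => |d₂ v|))
          ⊆ (T.erase c).image (fun t => t - c) := by
        intro y hy
        obtain ⟨v, hv, rfl⟩ := Finset.mem_image.mp hy
        have hv2 : d₂ v ≠ 0 := (Finset.mem_filter.mp hv).2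
        have hd'v : d' v ≠ 0 := by
          intro h0
          apply hv2
          rw [hd₂eq v]
          simp [hr', h0]
        have habs1 : |s0 v| = 1 := by
          show |Real.sign (d' v)| = 1
          rcases Real.sign_apply_eq_of_ne_zero (d' v) hd'v with h | h <;> rw [h] <;> norm_num
        have habs : |d₂ v| = |d' v| - c := by
          rw [hd₂eq v, abs_mul, habs1, one_mul, abs_of_nonneg (hr'nn v)]
          simp [hr', hd'v]
        have hgt : c < |d' v| := by
          rcases lt_or_eq_of_le (hcle v hd'v) with h | h
          · exact h
          · exfalso; apply hv2; rw [← abs_eq_zero, habs, ← h]; ring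
        exact Finset.mem_image.mpr ⟨|d' v|, Finset.mem_erase.mpr ⟨hgt.ne',
          Finset.mem_image_of_mem _ (Finset.mem_filter.mpr ⟨mem_univ v, hd'v⟩)⟩, by rw [habs]⟩
      calc ((univ.filter (fun v => d₂ v ≠ 0)).image (fun v => |d₂ v|)).card
          ≤ ((T.erase c).image (fun t => t - c)).card := Finset.card_le_card hsub
        _ ≤ (T.erase c).card := Finset.card_image_le
        _ = T.card - 1 := Finset.card_erase_of_mem hcmem
        _ ≤ n := by omega
    obtain ⟨s, ts, comp2, hΨs⟩ := ih d₂ hcard2 hΨd₂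
    refine ⟨s, ts, fun v => ⟨?_, ?_⟩, hΨs⟩
    · intro h
      have h2 := (comp2 v).1 h
      rw [hd₂eq v] at h2
      rcases ts0 v with h1 | h1 | h1
      · rw [h1] at h2; nlinarith [hr'nn v]
      · rw [h1] at h2; nlinarith
      · apply sign_pos_of_pos (x := d' v)
        rw [show Real.sign (d' v) = s0 v from rfl, h1]
        norm_num
    · intro h
      have h2 := (comp2 v).2 h
      rw [hd₂eq v] at h2
      rcases ts0 v with h1 | h1 | h1
      · apply sign_neg_of_neg (x := d' v)
        rw [show Real.sign (d' v) = s0 v from rfl, h1]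
        norm_num
      · rw [h1] at h2; nlinarith
      · rw [h1] at h2; nlinarith [hr'nn v]


lemma regroup (E : Finset (V × V)) (w : V × V → ℝ) (x d : V → ℝ) :
    ∑ e ∈ E, w e * Real.sign (x e.1 - x e.2) * (d e.1 - d e.2)
      = ∑ v, d v * ∑ e ∈ E.filter (fun e => e.1 = v ∨ e.2 = v),
          w e * Real.sign (x v - x (if e.1 = v then e.2 else e.1)) := by
  have hrhs : ∀ v, d v * ∑ e ∈ E.filter (fun e => e.1 = v ∨ e.2 = v),
      w e * Real.sign (x v - x (if e.1 = v then e.2 else e.1))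
      = ∑ e ∈ E, (if e.1 = v ∨ e.2 = v then
          d v * (w e * Real.sign (x v - x (if e.1 = v then e.2 else e.1))) else 0) := by
    intro v
    rw [Finset.sum_filter, Finset.mul_sum]
    apply Finset.sum_congr rfl
    intro e _
    by_cases h : e.1 = v ∨ e.2 = v <;> simp [h]
  rw [Finset.sum_congr rfl (fun v _ => hrhs v)]
  rw [Finset.sum_comm]
  apply Finset.sum_congr rfl
  intro e _
  by_cases h12 : e.1 = e.2
  · have hx : x e.1 - x e.2 = 0 := by rw [h12, sub_self]
    rw [hx, Real.sign_zero]
    rw [Finset.sum_eq_zero]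
    · ring
    intro v _
    by_cases h : e.1 = v ∨ e.2 = v
    · rw [if_pos h]
      have hv : e.1 = v := by rcases h with h | h; exacts [h, h12.trans h]
      rw [if_pos hv, ← hv, hx, Real.sign_zero]
      ring
    · rw [if_neg h]
  · have hptw : ∀ v, (if e.1 = v ∨ e.2 = v then
        d v * (w e * Real.sign (x v - x (if e.1 = v then e.2 else e.1))) else 0)
        = (if e.1 = v then w e * Real.sign (x e.1 - x e.2) * d v else 0)
          + (if e.2 = v then -(w e * Real.sign (x e.1 - x e.2) * d v) else 0) := by
      intro v
      by_cases h1 : e.1 = v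
      · have h2 : ¬ e.2 = v := fun h => h12 (h1.trans h.symm)
        rw [if_pos (Or.inl h1), if_pos h1, if_pos h1, if_neg h2, ← h1]
        ring
      · by_cases h2 : e.2 = v
        · rw [if_pos (Or.inr h2), if_neg h1, if_neg h1, if_pos h2, ← h2]
          rw [show x e.2 - x e.1 = -(x e.1 - x e.2) by ring, Real.sign_neg]
          ring
        · rw [if_neg (by tauto), if_neg h1, if_neg h2]
          ring
    rw [Finset.sum_congr rfl (fun v _ => hptw v), Finset.sum_add_distrib,
      Finset.sum_ite_eq univ e.1, Finset.sum_ite_eq univ e.2,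
      if_pos (Finset.mem_univ e.1), if_pos (Finset.mem_univ e.2)]
    ring


lemma ecoe_sum {ι : Type*} (s : Finset ι) (f : ι → ℝ) :
    ((∑ i ∈ s, f i : ℝ) : EReal) = ∑ i ∈ s, ((f i : ℝ) : EReal) :=
  map_sum (⟨⟨Real.toEReal, EReal.coe_zero⟩, EReal.coe_add⟩ : ℝ →+ EReal) f s

lemma equot3 {t : ℝ} (ht : 0 < t) (A' C' A B C : ℝ) {B' : EReal} (hB' : B' ≠ ⊥) :
    ((t⁻¹ : ℝ) : EReal) * (((A' : EReal) + B' + (C' : EReal))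
        - ((A : EReal) + (B : EReal) + (C : EReal)))
      = ((t⁻¹ * (A' - A) : ℝ) : EReal) + ((t⁻¹ : ℝ) : EReal) * (B' - (B : EReal))
        + ((t⁻¹ * (C' - C) : ℝ) : EReal) := by
  have hti : (0:ℝ) < t⁻¹ := inv_pos.mpr ht
  induction B' with
  | bot => exact absurd rfl hB'
  | top =>
    rw [EReal.add_top_of_ne_bot (EReal.coe_ne_bot _),
      EReal.top_add_of_ne_bot (EReal.coe_ne_bot _),
      show ((A : EReal) + (B : EReal) + (C : EReal)) = ((A + B + C : ℝ) : EReal) by norm_cast,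
      EReal.top_sub_coe, EReal.coe_mul_top_of_pos hti,
      EReal.top_sub_coe, EReal.coe_mul_top_of_pos hti,
      EReal.add_top_of_ne_bot (EReal.coe_ne_bot _),
      EReal.top_add_of_ne_bot (EReal.coe_ne_bot _)]
  | coe b => norm_cast; ring

lemma hasDirDeriv_objF_s19 (E : Finset (V × V)) (w : V × V → ℝ)
    (f : (V → ℝ) → ℝ) (hf : Differentiable ℝ f)
    (g : V → ℝ → EReal) (hgbot : ∀ v y, g v y ≠ ⊥)
    (gd : V → ℝ → ℝ → EReal)
    (hgd : ∀ v y, g v y ≠ ⊤ → ∀ dir : ℝ,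
      HasDirDeriv (g v) y dir (gd v y dir) ∧ gd v y dir ≠ ⊥)
    (x : V → ℝ) (hx : objF E w f g x ≠ ⊤) (d : V → ℝ) :
    HasDirDeriv (objF E w f g) x d (dirDerivVal E w f gd x d) := by
  classical
  have hgx_ne_top : ∀ v, g v (x v) ≠ ⊤ := by
    have hsum : (∑ v, g v (x v)) ≠ ⊤ := by
      intro h
      apply hx
      show ((f x : ℝ) : EReal) + ∑ v, g v (x v) + _ = ⊤
      rw [h, EReal.add_top_of_ne_bot (EReal.coe_ne_bot _),
        EReal.top_add_of_ne_bot (EReal.coe_ne_bot _)]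
    exact fun v => eterm_ne_top univ _ (fun i _ => hgbot i (x i)) hsum v (mem_univ v)
  have hG0 : ∀ v, g v (x v) = (((g v (x v)).toReal : ℝ) : EReal) := fun v =>
    (EReal.coe_toReal (hgx_ne_top v) (hgbot v (x v))).symm
  set G0 : V → ℝ := fun v => (g v (x v)).toReal with hG0def
  set Lg : V → EReal := fun v => gd v (x v) (d v) with hLgdef
  have hLgbot : ∀ v, Lg v ≠ ⊥ := fun v => (hgd v (x v) (hgx_ne_top v) (d v)).2
  set Lf : ℝ := fderiv ℝ f x d with hLf
  set ce : V × V → ℝ := fun e => w e * (if x e.1 = x e.2 then |d e.1 - d e.2|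
      else Real.sign (x e.1 - x e.2) * (d e.1 - d e.2)) with hce
  set L0 : EReal := (Lf : EReal) + (∑ v, Lg v) + ((∑ e ∈ E, ce e : ℝ) : EReal) with hL0
  have key : Tendsto (fun t : ℝ => ((t⁻¹ : ℝ) : EReal) *
      (objF E w f g (x + t • d) - objF E w f g x))
      (nhdsWithin 0 (Set.Ioi 0)) (nhds L0) := by
    have hQf : Tendsto (fun t : ℝ => ((t⁻¹ * (f (x + t • d) - f x) : ℝ) : EReal))
        (nhdsWithin 0 (Set.Ioi 0)) (nhds ((Lf : ℝ) : EReal)) :=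
      EReal.tendsto_coe.mpr (tendsto_fquot (hf x) d)
    have hQg : Tendsto (fun t : ℝ =>
        ∑ v, ((t⁻¹ : ℝ) : EReal) * (g v (x v + t * d v) - ((G0 v : ℝ) : EReal)))
        (nhdsWithin 0 (Set.Ioi 0)) (nhds (∑ v, Lg v)) := by
      apply etendsto_sum univ _ Lg (fun v _ => hLgbot v)
      intro v _
      have h1 := (hgd v (x v) (hgx_ne_top v) (d v)).1
      unfold HasDirDeriv at h1
      apply h1.congr
      intro t
      rw [smul_eq_mul, ← hG0 v]
    have hQTV : Tendsto (fun t : ℝ => ((t⁻¹ *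
        ((∑ e ∈ E, w e * |x e.1 + t * d e.1 - (x e.2 + t * d e.2)|)
          - ∑ e ∈ E, w e * |x e.1 - x e.2|) : ℝ) : EReal))
        (nhdsWithin 0 (Set.Ioi 0)) (nhds ((∑ e ∈ E, ce e : ℝ) : EReal)) := by
      apply EReal.tendsto_coe.mpr
      have heq : ∀ t : ℝ, (∑ e ∈ E, w e * (t⁻¹ * (|(x e.1 - x e.2) + t * (d e.1 - d e.2)|
          - |x e.1 - x e.2|)))
          = t⁻¹ * ((∑ e ∈ E, w e * |x e.1 + t * d e.1 - (x e.2 + t * d e.2)|)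
          - ∑ e ∈ E, w e * |x e.1 - x e.2|) := by
        intro t
        rw [← Finset.sum_sub_distrib, Finset.mul_sum]
        apply Finset.sum_congr rfl
        intro e _
        rw [show x e.1 + t * d e.1 - (x e.2 + t * d e.2)
          = (x e.1 - x e.2) + t * (d e.1 - d e.2) by ring]
        ring
      apply Tendsto.congr heq
      apply tendsto_finset_sum
      intro e _
      have h2 := (tendsto_absquot (x e.1 - x e.2) (d e.1 - d e.2)).const_mul (w e)
      have h3 : w e * (if x e.1 - x e.2 = 0 then |d e.1 - d e.2|
          else Real.sign (x e.1 - x e.2) * (d e.1 - d e.2)) = ce e := by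
        rw [hce]
        congr 1
        apply if_congr sub_eq_zero rfl rfl
      rw [h3] at h2
      exact h2
    have hsum1 := etendsto_add (EReal.coe_ne_bot _)
      (esum_ne_bot _ _ fun v _ => hLgbot v) hQf hQg
    have hsum2 := etendsto_add (by
        rw [ne_eq, EReal.add_eq_bot_iff]
        push_neg
        exact ⟨EReal.coe_ne_bot _, esum_ne_bot _ _ fun v _ => hLgbot v⟩)
      (EReal.coe_ne_bot _) hsum1 hQTV
    rw [hL0]
    apply hsum2.congr'
    filter_upwards [self_mem_nhdsWithin] with t ht
    have ht0 : (0:ℝ) < t := ht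
    show ((t⁻¹ * (f (x + t • d) - f x) : ℝ) : EReal)
        + (∑ v, ((t⁻¹ : ℝ) : EReal) * (g v (x v + t * d v) - ((G0 v : ℝ) : EReal)))
        + ((t⁻¹ * ((∑ e ∈ E, w e * |x e.1 + t * d e.1 - (x e.2 + t * d e.2)|)
          - ∑ e ∈ E, w e * |x e.1 - x e.2|) : ℝ) : EReal)
      = ((t⁻¹ : ℝ) : EReal) * (objF E w f g (x + t • d) - objF E w f g x)
    have hobj1 : objF E w f g (x + t • d)
        = ((f (x + t • d) : ℝ) : EReal) + (∑ v, g v (x v + t * d v))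
          + ((∑ e ∈ E, w e * |x e.1 + t * d e.1 - (x e.2 + t * d e.2)| : ℝ) : EReal) := rfl
    have hobj0 : objF E w f g x
        = ((f x : ℝ) : EReal) + (((∑ v, G0 v : ℝ)) : EReal)
          + ((∑ e ∈ E, w e * |x e.1 - x e.2| : ℝ) : EReal) := by
      show ((f x : ℝ) : EReal) + (∑ v, g v (x v)) + _ = _
      have h5 : (∑ v, g v (x v)) = ((∑ v, G0 v : ℝ) : EReal) := by
        rw [ecoe_sum]
        exact Finset.sum_congr rfl fun v _ => hG0 v
      rw [h5]
    rw [hobj1, hobj0, equot3 ht0 _ _ _ _ _ (esum_ne_bot _ _ fun v _ => hgbot v _),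
      esub_sum_coe, emul_pos_sum _ _ (inv_pos.mpr ht0) (fun v _ => by
        rw [sub_eq_add_neg, ne_eq, EReal.add_eq_bot_iff]
        push_neg
        exact ⟨hgbot v _, by rw [ne_eq, EReal.neg_eq_bot_iff]; exact EReal.coe_ne_top _⟩)]
  have hgd1bot : ∀ v, gd v (x v) 1 ≠ ⊥ := fun v => (hgd v (x v) (hgx_ne_top v) 1).2
  have hgdm1bot : ∀ v, gd v (x v) (-1) ≠ ⊥ := fun v => (hgd v (x v) (hgx_ne_top v) (-1)).2
  have hgdpos : ∀ v, 0 < d v → Lg v = ((d v : ℝ) : EReal) * gd v (x v) 1 := by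
    intro v hv
    have hs := hasDirDeriv_smul hv (hgd v (x v) (hgx_ne_top v) 1).1
    rw [smul_eq_mul, mul_one] at hs
    exact tendsto_nhds_unique (hgd v (x v) (hgx_ne_top v) (d v)).1 hs
  have hgdneg : ∀ v, d v < 0 → Lg v = ((-(d v) : ℝ) : EReal) * gd v (x v) (-1) := by
    intro v hv
    have hs := hasDirDeriv_smul (neg_pos.mpr hv) (hgd v (x v) (hgx_ne_top v) (-1)).1
    rw [smul_eq_mul, show -(d v) * (-1 : ℝ) = d v by ring] at hs
    exact tendsto_nhds_unique (hgd v (x v) (hgx_ne_top v) (d v)).1 hs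
  have hgdzero : ∀ v, d v = 0 → Lg v = 0 := by
    intro v hv
    have h2 : Tendsto (fun t : ℝ => ((t⁻¹ : ℝ) : EReal) * (g v (x v + t • (0:ℝ)) - g v (x v)))
        (nhdsWithin 0 (Set.Ioi 0)) (nhds 0) := by
      have h3 : (fun t : ℝ => ((t⁻¹ : ℝ) : EReal) * (g v (x v + t • (0:ℝ)) - g v (x v)))
          = fun _ => (0 : EReal) := by
        funext t
        rw [smul_zero, add_zero, esub_self (hgx_ne_top v) (hgbot v (x v)), mul_zero]
      rw [h3]
      exact tendsto_const_nhds
    show gd v (x v) (d v) = 0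
    rw [hv]
    exact tendsto_nhds_unique (hgd v (x v) (hgx_ne_top v) 0).1 h2
  set P := univ.filter (fun v => 0 < d v) with hP
  set N := univ.filter (fun v => d v < 0) with hN
  have hdisj : Disjoint P N := by
    rw [Finset.disjoint_left]
    intro v hvP hvN
    exact absurd (Finset.mem_filter.mp hvN).2 (not_lt.mpr (Finset.mem_filter.mp hvP).2.le)
  set Fv : V → ℝ := fun v => fderiv ℝ f x (Pi.single v 1) with hFv
  set Sv : V → ℝ := fun v => ∑ e ∈ E.filter (fun e => e.1 = v ∨ e.2 = v),
      w e * Real.sign (x v - x (if e.1 = v then e.2 else e.1)) with hSv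
  set TVeq : ℝ := ∑ e ∈ E.filter (fun e => x e.1 = x e.2), w e * |d e.1 - d e.2| with hTVeq
  have hLfsum : Lf = ∑ v, d v * Fv v := by
    rw [hLf]
    have hdec : d = ∑ v, d v • (Pi.single v (1:ℝ) : V → ℝ) := by
      funext j
      rw [Finset.sum_apply]
      simp only [Pi.smul_apply, Pi.single_apply, smul_eq_mul, mul_ite, mul_one, mul_zero]
      rw [Finset.sum_ite_eq Finset.univ j (fun v => d v), if_pos (Finset.mem_univ j)]
    conv_lhs => rw [hdec]
    rw [map_sum]
    apply Finset.sum_congr rfl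
    intro v _
    rw [map_smul]
    rfl
  have hce_split : ∑ e ∈ E, ce e = TVeq + ∑ v, d v * Sv v := by
    have h1 : ∀ e ∈ E, ce e = (if x e.1 = x e.2 then w e * |d e.1 - d e.2| else 0)
        + w e * Real.sign (x e.1 - x e.2) * (d e.1 - d e.2) := by
      intro e _
      simp only [hce]
      by_cases h : x e.1 = x e.2
      · rw [if_pos h, if_pos h, show x e.1 - x e.2 = 0 by rw [h, sub_self], Real.sign_zero]
        ring
      · rw [if_neg h, if_neg h]; ring
    rw [Finset.sum_congr rfl h1, Finset.sum_add_distrib, ← Finset.sum_filter, ← regroup]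
  have hPNsum : ∀ h : V → ℝ, (∀ v, d v = 0 → h v = 0) →
      ∑ v ∈ P, h v + ∑ v ∈ N, h v = ∑ v, h v := by
    intro h hzero
    rw [← Finset.sum_union hdisj]
    apply Finset.sum_subset (Finset.subset_univ _)
    intro v _ hv
    apply hzero
    rcases lt_trichotomy (d v) 0 with hc | hc | hc
    · exact absurd (Finset.mem_union_right _ (Finset.mem_filter.mpr ⟨mem_univ v, hc⟩)) hv
    · exact hc
    · exact absurd (Finset.mem_union_left _ (Finset.mem_filter.mpr ⟨mem_univ v, hc⟩)) hv
  set RP : ℝ := ∑ v ∈ P, d v * (Fv v + Sv v) with hRP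
  set RN : ℝ := ∑ v ∈ N, d v * (Fv v + Sv v) with hRN
  have hReq : Lf + ∑ e ∈ E, ce e = RP + RN + TVeq := by
    rw [hLfsum, hce_split, hRP, hRN,
      hPNsum (fun v => d v * (Fv v + Sv v))
        (fun v hv => by show d v * (Fv v + Sv v) = 0; rw [hv]; ring)]
    have h6 : ∑ v, d v * Fv v + ∑ v, d v * Sv v = ∑ v, d v * (Fv v + Sv v) := by
      rw [← Finset.sum_add_distrib]
      exact Finset.sum_congr rfl fun v _ => by ring
    linarith [h6]
  have hLgsplit : ∑ v, Lg v = (∑ v ∈ P, ((d v : ℝ) : EReal) * gd v (x v) 1)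
      + ∑ v ∈ N, ((-(d v) : ℝ) : EReal) * gd v (x v) (-1) := by
    have h1 : ∑ v ∈ P, Lg v + ∑ v ∈ N, Lg v = ∑ v, Lg v := by
      rw [← Finset.sum_union hdisj]
      apply Finset.sum_subset (Finset.subset_univ _)
      intro v _ hv
      apply hgdzero
      rcases lt_trichotomy (d v) 0 with hc | hc | hc
      · exact absurd (Finset.mem_union_right _ (Finset.mem_filter.mpr ⟨mem_univ v, hc⟩)) hv
      · exact hc
      · exact absurd (Finset.mem_union_left _ (Finset.mem_filter.mpr ⟨mem_univ v, hc⟩)) hv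
    rw [← h1]
    congr 1
    · exact Finset.sum_congr rfl fun v hv => hgdpos v (Finset.mem_filter.mp hv).2
    · exact Finset.sum_congr rfl fun v hv => hgdneg v (Finset.mem_filter.mp hv).2
  have hplus : ∀ v ∈ P, ((d v : ℝ) : EReal) * deltaPlus E w f gd x v
      = ((d v * (Fv v + Sv v) : ℝ) : EReal) + ((d v : ℝ) : EReal) * gd v (x v) 1 := by
    intro v hv
    exact emul_pos_add3 (Finset.mem_filter.mp hv).2 (Fv v) (Sv v) (hgd1bot v)
  have hminus : ∀ v ∈ N, ((d v : ℝ) : EReal) * deltaMinus E w f gd x v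
      = ((d v * (Fv v + Sv v) : ℝ) : EReal) + ((-(d v) : ℝ) : EReal) * gd v (x v) (-1) := by
    intro v hv
    have h1 : deltaMinus E w f gd x v
        = ((Fv v : ℝ) : EReal) + (-(gd v (x v) (-1))) + ((Sv v : ℝ) : EReal) := by
      show ((Fv v : ℝ) : EReal) - gd v (x v) (-1) + ((Sv v : ℝ) : EReal) = _
      rw [sub_eq_add_neg]
    rw [h1, emul_neg_add3 (Finset.mem_filter.mp hv).2 (Fv v) (Sv v)
      (by rw [ne_eq, EReal.neg_eq_top_iff]; exact hgdm1bot v)]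
    congr 1
    rw [EReal.coe_neg, neg_mul, mul_neg]
  have hLeq : L0 = dirDerivVal E w f gd x d := by
    rw [hL0, hLgsplit]
    show _ = (∑ v ∈ P, ((d v : ℝ) : EReal) * deltaPlus E w f gd x v)
      + (∑ v ∈ N, ((d v : ℝ) : EReal) * deltaMinus E w f gd x v) + ((TVeq : ℝ) : EReal)
    rw [Finset.sum_congr rfl hplus, Finset.sum_congr rfl hminus,
      Finset.sum_add_distrib, Finset.sum_add_distrib, ← ecoe_sum, ← ecoe_sum, ← hRP, ← hRN]
    have hfin : ((Lf : ℝ) : EReal) + ((∑ e ∈ E, ce e : ℝ) : EReal)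
        = ((RP : ℝ) : EReal) + ((RN : ℝ) : EReal) + ((TVeq : ℝ) : EReal) := by
      exact_mod_cast congrArg Real.toEReal hReq
    calc ((Lf : ℝ) : EReal)
        + ((∑ v ∈ P, ((d v : ℝ) : EReal) * gd v (x v) 1)
          + ∑ v ∈ N, ((-(d v) : ℝ) : EReal) * gd v (x v) (-1))
        + ((∑ e ∈ E, ce e : ℝ) : EReal)
        = ((Lf : ℝ) : EReal) + ((∑ e ∈ E, ce e : ℝ) : EReal)
          + ((∑ v ∈ P, ((d v : ℝ) : EReal) * gd v (x v) 1)
            + ∑ v ∈ N, ((-(d v) : ℝ) : EReal) * gd v (x v) (-1)) := by ac_rfl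
      _ = ((RP : ℝ) : EReal) + ((RN : ℝ) : EReal) + ((TVeq : ℝ) : EReal)
          + ((∑ v ∈ P, ((d v : ℝ) : EReal) * gd v (x v) 1)
            + ∑ v ∈ N, ((-(d v) : ℝ) : EReal) * gd v (x v) (-1)) := by rw [hfin]
      _ = ((RP : ℝ) : EReal) + ∑ v ∈ P, ((d v : ℝ) : EReal) * gd v (x v) 1
          + (((RN : ℝ) : EReal) + ∑ v ∈ N, ((-(d v) : ℝ) : EReal) * gd v (x v) (-1))
          + ((TVeq : ℝ) : EReal) := by ac_rfl
  unfold HasDirDeriv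
  rw [← hLeq]
  exact key


lemma eadd3_ne_top (A C : ℝ) {b : EReal} (hb : b ≠ ⊤) :
    (A : EReal) + b + (C : EReal) ≠ ⊤ := by
  induction b with
  | top => exact absurd rfl hb
  | bot => simp
  | coe b => rw [← EReal.coe_add, ← EReal.coe_add]; exact EReal.coe_ne_top _

lemma sum_pos_neg_split {M : Type*} [AddCommMonoid M] (d' : V → ℝ) (h : V → M)
    (hz : ∀ v, d' v = 0 → h v = 0) :
    ∑ v ∈ univ.filter (fun v => 0 < d' v), h v + ∑ v ∈ univ.filter (fun v => d' v < 0), h v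
      = ∑ v, h v := by
  have hdisj : Disjoint (univ.filter (fun v => 0 < d' v)) (univ.filter (fun v => d' v < 0)) := by
    rw [Finset.disjoint_left]
    intro v hvP hvN
    exact absurd (Finset.mem_filter.mp hvN).2 (not_lt.mpr (Finset.mem_filter.mp hvP).2.le)
  rw [← Finset.sum_union hdisj]
  apply Finset.sum_subset (Finset.subset_univ _)
  intro v _ hv
  apply hz
  rcases lt_trichotomy (d' v) 0 with hc | hc | hc
  · exact absurd (Finset.mem_union_right _ (Finset.mem_filter.mpr ⟨mem_univ v, hc⟩)) hv
  · exact hc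
  · exact absurd (Finset.mem_union_left _ (Finset.mem_filter.mpr ⟨mem_univ v, hc⟩)) hv

lemma descent (E : Finset (V × V)) (w : V × V → ℝ)
    (f : (V → ℝ) → ℝ) (gd : V → ℝ → ℝ → EReal) (x : V → ℝ)
    (h1 : ∀ v, gd v (x v) 1 ≠ ⊥) (hm1 : ∀ v, gd v (x v) (-1) ≠ ⊥)
    (d : V → ℝ) (hneg : dirDerivVal E w f gd x d < 0) :
    ∃ s : V → ℝ, (∀ v, s v = -1 ∨ s v = 0 ∨ s v = 1) ∧ dirDerivVal E w f gd x s < 0 := by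
  classical
  have hdp_ne_bot : ∀ v, deltaPlus E w f gd x v ≠ ⊥ := by
    intro v
    show _ + _ + _ ≠ ⊥
    rw [ne_eq, EReal.add_eq_bot_iff, EReal.add_eq_bot_iff]
    push_neg
    exact ⟨⟨EReal.coe_ne_bot _, h1 v⟩, EReal.coe_ne_bot _⟩
  have hdm_ne_top : ∀ v, deltaMinus E w f gd x v ≠ ⊤ := by
    intro v
    show _ - _ + _ ≠ ⊤
    rw [sub_eq_add_neg]
    exact eadd3_ne_top _ _ (by rw [ne_eq, EReal.neg_eq_top_iff]; exact hm1 v)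
  set P := univ.filter (fun v => 0 < d v) with hP
  set N := univ.filter (fun v => d v < 0) with hN
  have termP : ∀ v ∈ P, ((d v : ℝ) : EReal) * deltaPlus E w f gd x v ≠ ⊥ :=
    fun v hv => epos_mul_ne_bot (Finset.mem_filter.mp hv).2 (hdp_ne_bot v)
  have termN : ∀ v ∈ N, ((d v : ℝ) : EReal) * deltaMinus E w f gd x v ≠ ⊥ :=
    fun v hv => eneg_mul_ne_bot (Finset.mem_filter.mp hv).2 (hdm_ne_top v)
  have hSPbot : (∑ v ∈ P, ((d v : ℝ) : EReal) * deltaPlus E w f gd x v) ≠ ⊥ :=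
    esum_ne_bot _ _ termP
  have hSNbot : (∑ v ∈ N, ((d v : ℝ) : EReal) * deltaMinus E w f gd x v) ≠ ⊥ :=
    esum_ne_bot _ _ termN
  have htot := hneg.ne_top
  rw [dirDerivVal] at htot
  have hXY_ne_top : (∑ v ∈ P, ((d v : ℝ) : EReal) * deltaPlus E w f gd x v)
      + (∑ v ∈ N, ((d v : ℝ) : EReal) * deltaMinus E w f gd x v) ≠ ⊤ := by
    intro h
    apply htot
    rw [← hP, ← hN, h, EReal.top_add_of_ne_bot (EReal.coe_ne_bot _)]
  have hSPtop : (∑ v ∈ P, ((d v : ℝ) : EReal) * deltaPlus E w f gd x v) ≠ ⊤ := by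
    intro h
    exact hXY_ne_top (by rw [h, EReal.top_add_of_ne_bot hSNbot])
  have hSNtop : (∑ v ∈ N, ((d v : ℝ) : EReal) * deltaMinus E w f gd x v) ≠ ⊤ := by
    intro h
    exact hXY_ne_top (by rw [h, EReal.add_top_of_ne_bot hSPbot])
  have hpP : ∀ v ∈ P, deltaPlus E w f gd x v
      = (((deltaPlus E w f gd x v).toReal : ℝ) : EReal) := by
    intro v hv
    have hterm := eterm_ne_top P _ termP hSPtop v hv
    have hdv : 0 < d v := (Finset.mem_filter.mp hv).2
    have hne : deltaPlus E w f gd x v ≠ ⊤ := by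
      intro h
      exact hterm (by rw [h, EReal.coe_mul_top_of_pos hdv])
    exact (EReal.coe_toReal hne (hdp_ne_bot v)).symm
  have hmN : ∀ v ∈ N, deltaMinus E w f gd x v
      = (((deltaMinus E w f gd x v).toReal : ℝ) : EReal) := by
    intro v hv
    have hterm := eterm_ne_top N _ termN hSNtop v hv
    have hne : deltaMinus E w f gd x v ≠ ⊥ := by
      intro h
      apply hterm
      rw [h, EReal.coe_mul_bot_of_neg (Finset.mem_filter.mp hv).2]
    exact (EReal.coe_toReal (hdm_ne_top v) hne).symm
  set p : V → ℝ := fun v => (deltaPlus E w f gd x v).toReal with hp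
  set m : V → ℝ := fun v => (deltaMinus E w f gd x v).toReal with hm
  set q : V → ℝ := fun v => if 0 < d v then p v else m v with hq
  set E0 := E.filter (fun e => x e.1 = x e.2) with hE0
  have hval : ∀ d' : V → ℝ, (∀ v, 0 < d' v → 0 < d v) → (∀ v, d' v < 0 → d v < 0) →
      dirDerivVal E w f gd x d'
        = ((∑ v, d' v * q v + ∑ e ∈ E0, w e * |d' e.1 - d' e.2| : ℝ) : EReal) := by
    intro d' hc1 hc2
    have hsplit := sum_pos_neg_split d' (fun v => d' v * q v)
      (fun v hv => by show d' v * q v = 0; rw [hv]; ring)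
    have hP' : ∀ v ∈ univ.filter (fun v => 0 < d' v),
        ((d' v : ℝ) : EReal) * deltaPlus E w f gd x v = ((d' v * q v : ℝ) : EReal) := by
      intro v hv
      have hdv' : 0 < d' v := (Finset.mem_filter.mp hv).2
      have hdv : 0 < d v := hc1 v hdv'
      rw [hpP v (Finset.mem_filter.mpr ⟨mem_univ v, hdv⟩), ← EReal.coe_mul]
      congr 1
      show d' v * p v = d' v * q v
      rw [hq]
      simp only [if_pos hdv]
    have hN' : ∀ v ∈ univ.filter (fun v => d' v < 0),
        ((d' v : ℝ) : EReal) * deltaMinus E w f gd x v = ((d' v * q v : ℝ) : EReal) := by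
      intro v hv
      have hdv' : d' v < 0 := (Finset.mem_filter.mp hv).2
      have hdv : d v < 0 := hc2 v hdv'
      rw [hmN v (Finset.mem_filter.mpr ⟨mem_univ v, hdv⟩), ← EReal.coe_mul]
      congr 1
      show d' v * m v = d' v * q v
      rw [hq]
      simp only [if_neg (not_lt.mpr hdv.le)]
    rw [dirDerivVal, Finset.sum_congr rfl hP', Finset.sum_congr rfl hN',
      ← ecoe_sum, ← ecoe_sum, ← EReal.coe_add, ← EReal.coe_add, ← hE0]
    congr 1
    rw [← hsplit]
  have hΨd : (∑ v, d v * q v + ∑ e ∈ E0, w e * |d e.1 - d e.2| : ℝ) < 0 := by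
    have := hval d (fun v h => h) (fun v h => h)
    rw [this] at hneg
    exact_mod_cast hneg
  obtain ⟨s, ts, comp, hΨs⟩ := roundcore q E0 w
    (((univ.filter (fun v => d v ≠ 0)).image (fun v => |d v|)).card) d le_rfl hΨd
  refine ⟨s, ts, ?_⟩
  rw [hval s (fun v h => (comp v).1 h) (fun v h => (comp v).2 h)]
  exact_mod_cast hΨs


theorem stmt_19 (E : Finset (V × V)) (w : V × V → ℝ) (hw : ∀ e ∈ E, 0 ≤ w e)
    (f : (V → ℝ) → ℝ) (hf : Differentiable ℝ f)
    (g : V → ℝ → EReal) (hgbot : ∀ v y, g v y ≠ ⊥)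
    (gd : V → ℝ → ℝ → EReal)
    (hgd : ∀ v y, g v y ≠ ⊤ → ∀ dir : ℝ,
      HasDirDeriv (g v) y dir (gd v y dir) ∧ gd v y dir ≠ ⊥)
    (x : V → ℝ) (hx : objF E w f g x ≠ ⊤)
    (dstar : V → ℝ) (hdstar : ∀ v, dstar v = -1 ∨ dstar v = 0 ∨ dstar v = 1)
    (Lstar : EReal) (hLstar : HasDirDeriv (objF E w f g) x dstar Lstar)
    (hmin : ∀ d : V → ℝ, (∀ v, d v = -1 ∨ d v = 0 ∨ d v = 1) →
      ∀ L : EReal, HasDirDeriv (objF E w f g) x d L → Lstar ≤ L) :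
    Lstar ≤ 0 ∧
      ((∀ d : V → ℝ, ∀ L : EReal, HasDirDeriv (objF E w f g) x d L → 0 ≤ L)
        ↔ Lstar = 0) := by
  classical
  have hFbot : objF E w f g x ≠ ⊥ := by
    show _ + _ + _ ≠ ⊥
    rw [ne_eq, EReal.add_eq_bot_iff, EReal.add_eq_bot_iff]
    push_neg
    exact ⟨⟨EReal.coe_ne_bot _, esum_ne_bot _ _ fun v _ => hgbot v (x v)⟩, EReal.coe_ne_bot _⟩
  have hzero : HasDirDeriv (objF E w f g) x 0 0 := by
    unfold HasDirDeriv
    have h3 : (fun t : ℝ => ((t⁻¹ : ℝ) : EReal) *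
        (objF E w f g (x + t • (0 : V → ℝ)) - objF E w f g x)) = fun _ => (0 : EReal) := by
      funext t
      rw [smul_zero, add_zero, esub_self hx hFbot, mul_zero]
    rw [h3]
    exact tendsto_const_nhds
  have hle : Lstar ≤ 0 := hmin 0 (fun v => Or.inr (Or.inl rfl)) 0 hzero
  have hgx_ne_top : ∀ v, g v (x v) ≠ ⊤ := by
    have hsum : (∑ v, g v (x v)) ≠ ⊤ := by
      intro h
      apply hx
      show ((f x : ℝ) : EReal) + ∑ v, g v (x v) + _ = ⊤
      rw [h, EReal.add_top_of_ne_bot (EReal.coe_ne_bot _),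
        EReal.top_add_of_ne_bot (EReal.coe_ne_bot _)]
    exact fun v => eterm_ne_top univ _ (fun i _ => hgbot i (x i)) hsum v (mem_univ v)
  refine ⟨hle, ⟨fun h => le_antisymm hle (h dstar Lstar hLstar), fun h => ?_⟩⟩
  intro d L hL
  by_contra hL0
  have hLneg : L < 0 := lt_of_not_ge hL0
  have hd := hasDirDeriv_objF_s19 E w f hf g hgbot gd hgd x hx d
  have hLd : L = dirDerivVal E w f gd x d := tendsto_nhds_unique hL hd
  rw [hLd] at hLneg
  obtain ⟨s, ts, hs⟩ := descent E w f gd x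
    (fun v => (hgd v (x v) (hgx_ne_top v) 1).2)
    (fun v => (hgd v (x v) (hgx_ne_top v) (-1)).2) d hLneg
  have hmin_s := hmin s ts _ (hasDirDeriv_objF_s19 E w f hf g hgbot gd hgd x hx s)
  rw [h] at hmin_s
  exact absurd (lt_of_le_of_lt hmin_s hs) (lt_irrefl 0)
end
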